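/- (Proposition 1: FIM of the PPM ISAC parameter vector.) The matrix product J_ppmᵀ · I_η · J_ppm equals the 4×4 block matrix, with rows and columns each indexed by (Fin L) ⊕ (Fin 1) ⊕ (Fin L) ⊕ (Fin L), whose blocks are: (1,1) = Hᵀ·Λττ·H, (1,2) = Hᵀ·Λττ·E, (1,3) = 0, (1,4) = Hᵀ·Λτα; (2,1) = Eᵀ·Λττ·H, (2,2) = Eᵀ·Λττ·E, (2,3) = 0, (2,4) = Eᵀ·Λτα; (3,1) = 0, (3,2) = 0, (3,3) = 𝔟·Hᵀ·Λφφ·H where 𝔟 = 2π²·T_f²·N_f·(N_f − 1)·(2N_f − 1)/3, (3,4) = 0; (4,1) = Λατ·H, (4,2) = Λατ·E, (4,3) = 0, (4,4) = Λαα. -/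
import Mathlib


open Matrix

noncomputable section

/-- The matrix `H`: first column all ones, agreeing with the identity elsewhere. -/
def Hmat (L : ℕ) : Matrix (Fin L) (Fin L) ℂ :=
  Matrix.of fun i j => if j.val = 0 ∨ i = j then 1 else 0

/-- The all-ones column vector `E` of length `L`. -/
def Emat (L : ℕ) : Matrix (Fin L) (Fin 1) ℂ :=
  Matrix.of fun _ _ => 1

/-- The FIM of the observation vector. -/
def Ieta (L Nf : ℕ) (Λττ Λτα Λατ Λφφ Λαα : Matrix (Fin L) (Fin L) ℂ) :
    Matrix (Fin L ⊕ (Fin Nf × Fin L) ⊕ Fin L) (Fin L ⊕ (Fin Nf × Fin L) ⊕ Fin L) ℂ :=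
  Matrix.of fun i j =>
    match i, j with
    | Sum.inl a, Sum.inl b => Λττ a b
    | Sum.inl a, Sum.inr (Sum.inr b) => Λτα a b
    | Sum.inr (Sum.inr a), Sum.inl b => Λατ a b
    | Sum.inr (Sum.inr a), Sum.inr (Sum.inr b) => Λαα a b
    | Sum.inr (Sum.inl (κ, a)), Sum.inr (Sum.inl (κ', b)) => if κ = κ' then Λφφ a b else 0
    | _, _ => 0

/-- The Jacobian matrix of the PPM ISAC case: row blocks `[H, E, 0, 0]` for the delays,
`[0, 0, (2πκT_f)·H, 0]` for the phases, `[0, 0, 0, I_L]` for the amplitudes. -/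
def Jppm (L Nf : ℕ) (Tf : ℝ) :
    Matrix (Fin L ⊕ (Fin Nf × Fin L) ⊕ Fin L) (Fin L ⊕ Fin 1 ⊕ Fin L ⊕ Fin L) ℂ :=
  Matrix.of fun i j =>
    match i, j with
    | Sum.inl a, Sum.inl b => Hmat L a b
    | Sum.inl a, Sum.inr (Sum.inl b) => Emat L a b
    | Sum.inr (Sum.inl (κ, a)), Sum.inr (Sum.inr (Sum.inl b)) =>
        ((2 * Real.pi * (κ.1 : ℝ) * Tf : ℝ) : ℂ) * Hmat L a b
    | Sum.inr (Sum.inr a), Sum.inr (Sum.inr (Sum.inr b)) => (1 : Matrix (Fin L) (Fin L) ℂ) a b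
    | _, _ => 0


lemma sum_sq_cast (n : ℕ) : ∑ k ∈ Finset.range n, (k : ℝ) ^ 2
    = n * ((n : ℝ) - 1) * (2 * (n : ℝ) - 1) / 6 := by
  induction n with
  | zero => simp
  | succ m ih => rw [Finset.sum_range_succ, ih]; push_cast; ring

set_option maxHeartbeats 1000000 in
/-- Proposition 1: the FIM of the PPM ISAC parameter vector. -/
theorem fim_ppm (L Nf : ℕ) (hL : 1 ≤ L) (Tf : ℝ)
    (Λττ Λτα Λατ Λφφ Λαα : Matrix (Fin L) (Fin L) ℂ) :
    (Jppm L Nf Tf)ᵀ * Ieta L Nf Λττ Λτα Λατ Λφφ Λαα * Jppm L Nf Tf =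
      Matrix.of (fun (i j : Fin L ⊕ Fin 1 ⊕ Fin L ⊕ Fin L) =>
        match i, j with
        | Sum.inl a, Sum.inl b => ((Hmat L)ᵀ * Λττ * Hmat L) a b
        | Sum.inl a, Sum.inr (Sum.inl b) => ((Hmat L)ᵀ * Λττ * Emat L) a b
        | Sum.inl _, Sum.inr (Sum.inr (Sum.inl _)) => 0
        | Sum.inl a, Sum.inr (Sum.inr (Sum.inr b)) => ((Hmat L)ᵀ * Λτα) a b
        | Sum.inr (Sum.inl a), Sum.inl b => ((Emat L)ᵀ * Λττ * Hmat L) a b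
        | Sum.inr (Sum.inl a), Sum.inr (Sum.inl b) => ((Emat L)ᵀ * Λττ * Emat L) a b
        | Sum.inr (Sum.inl _), Sum.inr (Sum.inr (Sum.inl _)) => 0
        | Sum.inr (Sum.inl a), Sum.inr (Sum.inr (Sum.inr b)) => ((Emat L)ᵀ * Λτα) a b
        | Sum.inr (Sum.inr (Sum.inl _)), Sum.inl _ => 0
        | Sum.inr (Sum.inr (Sum.inl _)), Sum.inr (Sum.inl _) => 0
        | Sum.inr (Sum.inr (Sum.inl a)), Sum.inr (Sum.inr (Sum.inl b)) =>
            ((2 * Real.pi ^ 2 * Tf ^ 2 * (Nf : ℝ) * ((Nf : ℝ) - 1) * (2 * (Nf : ℝ) - 1) / 3 : ℝ) : ℂ) *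
              ((Hmat L)ᵀ * Λφφ * Hmat L) a b
        | Sum.inr (Sum.inr (Sum.inl _)), Sum.inr (Sum.inr (Sum.inr _)) => 0
        | Sum.inr (Sum.inr (Sum.inr a)), Sum.inl b => (Λατ * Hmat L) a b
        | Sum.inr (Sum.inr (Sum.inr a)), Sum.inr (Sum.inl b) => (Λατ * Emat L) a b
        | Sum.inr (Sum.inr (Sum.inr _)), Sum.inr (Sum.inr (Sum.inl _)) => 0
        | Sum.inr (Sum.inr (Sum.inr a)), Sum.inr (Sum.inr (Sum.inr b)) => Λαα a b) := by

  ext i j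
  obtain i | i | i | i := i <;> obtain j | j | j | j := j <;>
    simp only [Matrix.mul_apply, Matrix.transpose_apply, Ieta, Jppm, Matrix.of_apply,
      Fintype.sum_sum_type, Fintype.sum_prod_type, zero_mul, mul_zero,
      Finset.sum_const_zero, add_zero, zero_add, Matrix.one_apply, ite_mul, mul_ite,
      Finset.sum_ite_eq, Finset.sum_ite_eq', Finset.mem_univ, if_true, one_mul, mul_one]
  set c : Fin Nf → ℂ := fun κ => ((2 * Real.pi * (κ : ℕ) * Tf : ℝ) : ℂ) with hc
  have key : ∀ (κ : Fin Nf) (x1 : Fin L),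
      (∑ x2 : Fin Nf, ∑ x3 : Fin L,
          if x2 = κ then ((2 * Real.pi * (x2 : ℕ) * Tf : ℝ) : ℂ) * Hmat L x3 i * Λφφ x3 x1 else 0)
        = ∑ x3 : Fin L, c κ * Hmat L x3 i * Λφφ x3 x1 := by
    intro κ x1
    rw [Finset.sum_comm]
    simp [hc]
  calc ∑ x : Fin Nf, ∑ x1 : Fin L,
        (∑ x2 : Fin Nf, ∑ x3 : Fin L,
          if x2 = x then ((2 * Real.pi * (x2 : ℕ) * Tf : ℝ) : ℂ) * Hmat L x3 i * Λφφ x3 x1 else 0) *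
          (c x * Hmat L x1 j)
      = ∑ x : Fin Nf, c x * c x *
          ∑ x1 : Fin L, (∑ x3 : Fin L, Hmat L x3 i * Λφφ x3 x1) * Hmat L x1 j := by
        refine Finset.sum_congr rfl fun κ _ => ?_
        rw [Finset.mul_sum]
        refine Finset.sum_congr rfl fun x1 _ => ?_
        rw [key, Finset.sum_mul, Finset.sum_mul, Finset.mul_sum]
        exact Finset.sum_congr rfl fun x3 _ => by ring
    _ = (∑ x : Fin Nf, c x * c x) *
          ∑ x1 : Fin L, (∑ x3 : Fin L, Hmat L x3 i * Λφφ x3 x1) * Hmat L x1 j := by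
        rw [Finset.sum_mul]
    _ = ((2 * Real.pi ^ 2 * Tf ^ 2 * (Nf : ℝ) * ((Nf : ℝ) - 1) * (2 * (Nf : ℝ) - 1) / 3 : ℝ) : ℂ) *
          ∑ x : Fin L, (∑ x1 : Fin L, Hmat L x1 i * Λφφ x1 x) * Hmat L x j := by
        congr 1
        have : (∑ x : Fin Nf, c x * c x)
            = (((∑ k ∈ Finset.range Nf, (k : ℝ) ^ 2) * (4 * Real.pi ^ 2 * Tf ^ 2) : ℝ) : ℂ) := by
          calc ∑ x : Fin Nf, c x * c x
              = ∑ x : Fin Nf, (((((x : ℕ) : ℝ) ^ 2 * (4 * Real.pi ^ 2 * Tf ^ 2) : ℝ)) : ℂ) :=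
                Finset.sum_congr rfl fun k _ => by rw [hc]; push_cast; ring
            _ = ∑ k ∈ Finset.range Nf, ((((k : ℝ) ^ 2 * (4 * Real.pi ^ 2 * Tf ^ 2) : ℝ)) : ℂ) :=
                Fin.sum_univ_eq_sum_range (fun k : ℕ => ((((k : ℝ) ^ 2 * (4 * Real.pi ^ 2 * Tf ^ 2) : ℝ)) : ℂ)) Nf
            _ = _ := by rw [Finset.sum_mul]; push_cast; ring
        rw [this, sum_sq_cast]
        norm_num
        ring_nf
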